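/- arXiv:2401.12849 — 2 statements merged into one kernel-verified Lean document; each statement's English description precedes it below -/
import Mathlib

section
/- (Bellman optimality condition.) For every state s, the optimal binary value functions satisfy v^*(s) = min_{a ∈ A} b^*(s, a). -/
open scoped Classical

variable {S A : Type*}

/-- `reach F π t s` : the `t`-step reachable set from state `s` under policy `π`
(a policy assigns to each state the set of allowed actions).
`F_0^π(s) = {s}` and `F_{t+1}^π(s) = { F(s', a) : s' ∈ F_t^π(s), a ∈ π(s') }`. -/
def reach (F : S → A → S) (π : S → Set A) : ℕ → S → Set S
  | 0, s => {s}
  | t + 1, s => {s'' | ∃ s' ∈ reach F π t s, ∃ a ∈ π s', s'' = F s' a}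

/-- `reachSA F π t s a` : the `t`-step reachable set from the state-action pair `(s, a)`:
`F_0^π(s,a) = {s}`, `F_1^π(s,a) = {F(s,a)}`, and for `t ≥ 1`,
`F_{t+1}^π(s,a) = { F(s', a') : s' ∈ F_t^π(s,a), a' ∈ π(s') }`. -/
def reachSA (F : S → A → S) (π : S → Set A) : ℕ → S → A → Set S
  | 0, s, _ => {s}
  | 1, s, a => {F s a}
  | t + 2, s, a => {s'' | ∃ s' ∈ reachSA F π (t + 1) s a, ∃ a' ∈ π s', s'' = F s' a'}

/-- The insecurity function: `i(s) = 1` if `s ∈ G`, else `0`. -/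
noncomputable def insec (G : Set S) (s : S) : ℕ := if s ∈ G then 1 else 0

/-- The binary safety value function of a policy:
`v^π(s) = 1` iff some reachable state from `s` lies in `G`. -/
noncomputable def vPol (F : S → A → S) (G : Set S) (π : S → Set A) (s : S) : ℕ :=
  if ∃ t : ℕ, ∃ s' ∈ reach F π t s, s' ∈ G then 1 else 0

/-- The binary safety action-value function of a policy:
`b^π(s,a) = 1` iff some reachable state from `(s,a)` lies in `G`. -/
noncomputable def bPol (F : S → A → S) (G : Set S) (π : S → Set A) (s : S) (a : A) : ℕ :=
  if ∃ t : ℕ, ∃ s' ∈ reachSA F π t s a, s' ∈ G then 1 else 0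

/-- The optimal binary value function `v^*(s) = inf_π v^π(s)`,
the infimum over all (nonempty-support) policies. -/
noncomputable def vStar (F : S → A → S) (G : Set S) (s : S) : ℕ :=
  ⨅ π : {π : S → Set A // ∀ x, (π x).Nonempty}, vPol F G π.1 s

/-- The optimal binary action-value function `b^*(s,a) = inf_π b^π(s,a)`. -/
noncomputable def bStar (F : S → A → S) (G : Set S) (s : S) (a : A) : ℕ :=
  ⨅ π : {π : S → Set A // ∀ x, (π x).Nonempty}, bPol F G π.1 s a

/-- The binary Bellman operator:
`(T b)(s,a) = i(s) + (1 − i(s)) · min_{a'} b(F(s,a), a')`. -/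
noncomputable def Tb (F : S → A → S) (G : Set S) (b : S → A → ℕ) : S → A → ℕ :=
  fun s a => insec G s + (1 - insec G s) * ⨅ a' : A, b (F s a) a'

/-!
A state is safe under a policy exactly when it lies in a set disjoint from `G` that is closed
under the transitions the policy allows. If `π` keeps `s` safe, any action `a ∈ π s` keeps `(s, a)` safe under `π`.
Conversely, if `π` keeps `(s, a)` safe, then the policy that plays `a` at `s` and follows `π`
elsewhere keeps `s` safe: adding `s` to an invariant set witnessing the safety of `F s a` under
`π` gives an invariant set for the new policy. Since all values lie in `{0, 1}`, agreement of the
zero sets of `v^*(s)` and `min_a b^*(s, a)` is enough.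
-/

theorem Nat.iInf_eq_zero_iff {ι : Sort*} [Nonempty ι] {f : ι → ℕ} :
    ⨅ i, f i = 0 ↔ ∃ i, f i = 0 := by
  refine ⟨fun h => ?_, fun ⟨i, hi⟩ => Nat.eq_zero_of_le_zero ?_⟩
  · obtain ⟨i, hi⟩ := ciInf_mem f
    exact ⟨i, hi.trans h⟩
  · exact hi ▸ ciInf_le' f i

abbrev Policy (S A : Type*) := {π : S → Set A // ∀ x, (π x).Nonempty}

instance [Nonempty A] : Nonempty (Policy S A) :=
  ⟨⟨fun _ => Set.univ, fun _ => Set.univ_nonempty⟩⟩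

def IsPolicyInvariant (F : S → A → S) (π : S → Set A) (R : Set S) : Prop :=
  ∀ x ∈ R, ∀ a ∈ π x, F x a ∈ R

section Reach

variable {F : S → A → S} {π : S → Set A}

theorem reach_subset_of_isPolicyInvariant {R : Set S} (hR : IsPolicyInvariant F π R)
    {s : S} (hs : s ∈ R) : ∀ t, reach F π t s ⊆ R
  | 0 => Set.singleton_subset_iff.2 hs
  | t + 1 => by
    rintro _ ⟨x, hx, a, ha, rfl⟩
    exact hR x (reach_subset_of_isPolicyInvariant hR hs t hx) a ha

theorem isPolicyInvariant_iUnion_reach (s : S) :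
    IsPolicyInvariant F π (⋃ t, reach F π t s) := by
  intro x hx a ha
  obtain ⟨t, hx⟩ := Set.mem_iUnion.1 hx
  exact Set.mem_iUnion.2 ⟨t + 1, x, hx, a, ha, rfl⟩

theorem IsPolicyInvariant.insert_update [DecidableEq S] {R : Set S}
    (hR : IsPolicyInvariant F π R) {s : S} {a : A} (ha : F s a ∈ R) :
    IsPolicyInvariant F (Function.update π s {a}) (insert s R) := by
  rintro x hx b hb
  rcases eq_or_ne x s with rfl | hxs
  · rw [Function.update_self, Set.mem_singleton_iff] at hb
    exact hb ▸ Set.mem_insert_of_mem _ ha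
  · rw [Function.update_of_ne hxs] at hb
    exact Set.mem_insert_of_mem _ (hR x ((Set.mem_insert_iff.1 hx).resolve_left hxs) b hb)

theorem reachSA_succ (t : ℕ) (s : S) (a : A) :
    reachSA F π (t + 1) s a = reach F π t (F s a) := by
  induction t with
  | zero => rfl
  | succ t ih => simp only [reachSA, reach, ih]

end Reach

section Values

variable {F : S → A → S} {G : Set S} {π : S → Set A}

theorem vPol_le_one (s : S) : vPol F G π s ≤ 1 := by
  unfold vPol; split <;> omega

theorem bPol_le_one (s : S) (a : A) : bPol F G π s a ≤ 1 := by
  unfold bPol; split <;> omega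

theorem vPol_eq_zero_iff {s : S} : vPol F G π s = 0 ↔ ∀ t, ∀ x ∈ reach F π t s, x ∉ G := by
  simp [vPol]

theorem vPol_eq_zero_iff_exists_isPolicyInvariant {s : S} :
    vPol F G π s = 0 ↔ ∃ R, s ∈ R ∧ Disjoint R G ∧ IsPolicyInvariant F π R := by
  rw [vPol_eq_zero_iff]
  constructor
  · intro hsafe
    refine ⟨⋃ t, reach F π t s, Set.mem_iUnion.2 ⟨0, rfl⟩, ?_, isPolicyInvariant_iUnion_reach s⟩
    refine Set.disjoint_left.2 fun x hx => ?_
    obtain ⟨t, hx⟩ := Set.mem_iUnion.1 hx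
    exact hsafe t x hx
  · rintro ⟨R, hs, hRG, hR⟩ t x hx
    exact Set.disjoint_left.1 hRG (reach_subset_of_isPolicyInvariant hR hs t hx)

theorem bPol_eq_zero_iff {s : S} {a : A} :
    bPol F G π s a = 0 ↔ s ∉ G ∧ vPol F G π (F s a) = 0 := by
  have hsplit : (∃ t, ∃ x ∈ reachSA F π t s a, x ∈ G) ↔
      s ∈ G ∨ ∃ t, ∃ x ∈ reach F π t (F s a), x ∈ G := by
    rw [← Nat.or_exists_add_one]
    simp only [reachSA_succ, reachSA, Set.mem_singleton_iff, exists_eq_left]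
  simp only [bPol, vPol, hsplit, ite_eq_right_iff, one_ne_zero, imp_false, not_or]

end Values

theorem exists_vPol_eq_zero_iff_exists_bPol_eq_zero (F : S → A → S) (G : Set S) (s : S) :
    (∃ π : Policy S A, vPol F G π.1 s = 0) ↔ ∃ a, ∃ π : Policy S A, bPol F G π.1 s a = 0 := by
  simp only [bPol_eq_zero_iff, vPol_eq_zero_iff_exists_isPolicyInvariant]
  constructor
  · rintro ⟨π, R, hs, hRG, hR⟩
    obtain ⟨a, ha⟩ := π.2 s
    exact ⟨a, π, Set.disjoint_left.1 hRG hs, R, hR s hs a ha, hRG, hR⟩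
  · rintro ⟨a, π, hsG, R, ha, hRG, hR⟩
    let π' : Policy S A := ⟨Function.update π.1 s {a}, fun x => by
      rcases eq_or_ne x s with rfl | hx
      · simp
      · simpa [hx] using π.2 x⟩
    exact ⟨π', insert s R, Set.mem_insert s R, Set.disjoint_insert_left.2 ⟨hsG, hRG⟩,
      hR.insert_update ha⟩

theorem bellman_optimality_general [Nonempty A] (F : S → A → S) (G : Set S) (s : S) :
    vStar F G s = ⨅ a : A, bStar F G s a := by
  have hv : vStar F G s ≤ 1 := (ciInf_le' _ (Classical.arbitrary _)).trans (vPol_le_one s)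
  have hb : ⨅ a, bStar F G s a ≤ 1 :=
    (ciInf_le' _ (Classical.arbitrary A)).trans <|
      (ciInf_le' _ (Classical.arbitrary _)).trans (bPol_le_one s _)
  have hzero : vStar F G s = 0 ↔ ⨅ a, bStar F G s a = 0 := by
    simp only [vStar, bStar, Nat.iInf_eq_zero_iff]
    exact exists_vPol_eq_zero_iff_exists_bPol_eq_zero F G s
  omega

/-- Bellman optimality condition: for every state `s`,
`v^*(s) = min_{a ∈ A} b^*(s, a)`. -/
theorem bellman_optimality [Fintype A] [Nonempty A] (F : S → A → S) (G : Set S) (s : S) :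
    vStar F G s = ⨅ a : A, bStar F G s a :=
  bellman_optimality_general F G s
end

section
/- (Theorem 1(iii), invariance part.) Let b̃ be a fixed point of the binary Bellman operator T with associated safe set C = C(b̃), and let π be any policy such that for every s ∈ C and every action a, b̃(s, a) = 1 implies a ∉ π(s). Then C is invariant under π: for every s₀ ∈ C and every t ≥ 0, F_t^π(s₀) ⊆ C. -/
open scoped Classical

variable {S A : Type*}

/-! A fixed point `b` of the Bellman operator with `b s a = 0` forces `s ∉ G` and some action
of value `0` at `F s a`, i.e. `F s a ∈ C(b)`. Inside `C(b)` the policy only takes actions of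
value `0`, so `C(b)` is closed under one step of the policy, hence under any number of steps. -/

theorem reach_subset_of_maps_to {F : S → A → S} {π : S → Set A} {C : Set S}
    (hC : ∀ s ∈ C, ∀ a ∈ π s, F s a ∈ C) {s₀ : S} (hs₀ : s₀ ∈ C) :
    ∀ t, reach F π t s₀ ⊆ C
  | 0 => by simpa [reach] using hs₀
  | t + 1 => by
    rintro _ ⟨s, hs, a, ha, rfl⟩
    exact hC s (reach_subset_of_maps_to hC hs₀ t hs) a ha

def safeSet (b : S → A → ℕ) : Set S := {x | ⨅ a, b x a = 0}

section Bellman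

variable {F : S → A → S} {G : Set S} {b : S → A → ℕ}

theorem Tb_eq_zero_iff {s : S} {a : A} :
    Tb F G b s a = 0 ↔ s ∉ G ∧ ⨅ a', b (F s a) a' = 0 := by
  by_cases hs : s ∈ G <;> simp [Tb, insec, hs]

theorem map_mem_safeSet_of_fixed (hfix : Tb F G b = b) {s : S} {a : A} (hsa : b s a = 0) :
    F s a ∈ safeSet b :=
  (Tb_eq_zero_iff.mp (by rwa [hfix])).2

end Bellman

theorem safe_policy_invariance_general (F : S → A → S) (G : Set S)
    (b : S → A → ℕ) (hb : ∀ s a, b s a = 0 ∨ b s a = 1) (hfix : Tb F G b = b)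
    (π : S → Set A)
    (hsafe : ∀ s ∈ {x : S | (⨅ a : A, b x a) = 0}, ∀ a : A, b s a = 1 → a ∉ π s) :
    ∀ s₀ ∈ {x : S | (⨅ a : A, b x a) = 0}, ∀ t : ℕ,
      reach F π t s₀ ⊆ {x : S | (⨅ a : A, b x a) = 0} := by
  intro s₀ hs₀
  refine reach_subset_of_maps_to (fun s hs a ha => map_mem_safeSet_of_fixed hfix ?_) hs₀
  exact (hb s a).resolve_right fun h => hsafe s hs a h ha

/-- Theorem 1(iii), invariance part: if `b̃` is a fixed point of `T`
and `π` is a policy that never takes an action `a` with `b̃(s, a) = 1` at states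
`s ∈ C = C(b̃)`, then `C` is invariant under `π`. -/
theorem safe_policy_invariance [Fintype A] [Nonempty A] (F : S → A → S) (G : Set S)
    (b : S → A → ℕ) (hb : ∀ s a, b s a = 0 ∨ b s a = 1) (hfix : Tb F G b = b)
    (π : S → Set A) (hπ : ∀ x, (π x).Nonempty)
    (hsafe : ∀ s ∈ {x : S | (⨅ a : A, b x a) = 0}, ∀ a : A, b s a = 1 → a ∉ π s) :
    ∀ s₀ ∈ {x : S | (⨅ a : A, b x a) = 0}, ∀ t : ℕ,
      reach F π t s₀ ⊆ {x : S | (⨅ a : A, b x a) = 0} :=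
  safe_policy_invariance_general F G b hb hfix π hsafe
end
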